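/- Let p be a prime, t_1,...,t_k integers with p ∤ t_k, and C(X) = X^k - t_1 X^{k-1} - ... - t_k. If C(X) is squarefree mod p (equivalently, p does not divide the discriminant of C), then p does not divide the period c_p of the generalized Fibonacci sequence mod p. -/

import Mathlib

open Polynomial

/-!
Modulo `p` the sequence is `n ↦ L (x ^ n)`, where `x` is the class of `X` in
`R = 𝔽_p[X] ⧸ (C)` and `L` is the coordinate of `x ^ (k - 1)` in the basis `1, x, …, x ^ (k - 1)`.
As `C(0) = -t_k` is nonzero mod `p`, `x` is a unit of the finite ring `R`, so its order is a
period and the minimal period divides it. As `C` is squarefree, `R` is reduced, hence Frobenius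
is injective on `R`: `y ^ p = 1` forces `y = 1`, so `p` cannot divide the order of `x`.
-/

theorem eq_one_of_pow_char_eq_one {R : Type*} [CommRing R] [IsReduced R] (p : ℕ) [Fact p.Prime]
    [CharP R p] {x : R} (hx : x ^ p = 1) : x = 1 :=
  frobenius_inj R p (by rw [frobenius_def, frobenius_def, hx, one_pow])

theorem not_dvd_orderOf_of_isReduced {R : Type*} [CommRing R] [IsReduced R] (p : ℕ)
    [hp : Fact p.Prime] [CharP R p] {x : R} (hx : IsOfFinOrder x) : ¬ p ∣ orderOf x := by
  rintro ⟨d, hd⟩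
  have hd_pos : 0 < d := Nat.pos_of_mul_pos_left (hd ▸ hx.orderOf_pos)
  have hxd : x ^ d = 1 :=
    eq_one_of_pow_char_eq_one p (by rw [← pow_mul, mul_comm, ← hd, pow_orderOf_eq_one])
  have hle : p * d ≤ d := hd ▸ Nat.le_of_dvd hd_pos (orderOf_dvd_of_pow_eq_one hxd)
  nlinarith [hp.out.two_le]

theorem Function.Periodic.sInf_dvd {α : Type*} {g : ℕ → α} {m : ℕ} (hg : Periodic g m)
    (hm : 0 < m) : sInf {c | 0 < c ∧ Periodic g c} ∣ m := by
  set c₀ := sInf {c | 0 < c ∧ Periodic g c}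
  obtain ⟨hc₀_pos, hc₀⟩ : 0 < c₀ ∧ Periodic g c₀ :=
    Nat.sInf_mem (s := {c | 0 < c ∧ Periodic g c}) ⟨m, hm, hg⟩
  have hmod : Periodic g (m % c₀) := fun x => by
    rw [← hc₀.nat_mul (m / c₀), ← hg x]
    congr 1
    have := Nat.mod_add_div' m c₀
    push_cast
    omega
  refine Nat.dvd_of_mod_eq_zero (Nat.eq_zero_of_not_pos fun hpos => ?_)
  have hle : c₀ ≤ m % c₀ :=
    Nat.sInf_le (show m % c₀ ∈ {c | 0 < c ∧ Periodic g c} from ⟨hpos, hmod⟩)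
  exact hle.not_gt (Nat.mod_lt m hc₀_pos)

section RecurrenceCharPoly

variable {R : Type*} [CommRing R] {k : ℕ} (c : Fin k → R)

noncomputable def recurrenceCharPoly : R[X] :=
  X ^ k - ∑ j : Fin k, C (c j) * X ^ (k - 1 - (j : ℕ))

theorem recurrenceCharPoly_map {S : Type*} [CommRing S] (φ : R →+* S) :
    (recurrenceCharPoly c).map φ = recurrenceCharPoly (φ ∘ c) := by
  simp [recurrenceCharPoly, Polynomial.map_sub, Polynomial.map_sum]

theorem degree_sum_C_mul_X_pow_lt :
    (∑ j : Fin k, C (c j) * X ^ (k - 1 - (j : ℕ))).degree < (k : WithBot ℕ) := by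
  refine (degree_sum_le _ _).trans_lt ((Finset.sup_lt_iff (WithBot.bot_lt_coe k)).mpr ?_)
  intro j _
  exact (degree_C_mul_X_pow_le _ _).trans_lt (Nat.cast_lt.mpr (by omega))

theorem recurrenceCharPoly_monic : (recurrenceCharPoly c).Monic :=
  monic_X_pow_sub (degree_sum_C_mul_X_pow_lt c)

theorem degree_recurrenceCharPoly [Nontrivial R] :
    (recurrenceCharPoly c).degree = (k : WithBot ℕ) := by
  rw [recurrenceCharPoly, degree_sub_eq_left_of_degree_lt, degree_X_pow]
  simpa using degree_sum_C_mul_X_pow_lt c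

theorem natDegree_recurrenceCharPoly [Nontrivial R] : (recurrenceCharPoly c).natDegree = k :=
  natDegree_eq_of_degree_eq_some (degree_recurrenceCharPoly c)

theorem coeff_zero_recurrenceCharPoly (hk : 0 < k) :
    (recurrenceCharPoly c).coeff 0 = -c ⟨k - 1, by omega⟩ := by
  have hterm (j : Fin k) : (C (c j) * X ^ (k - 1 - (j : ℕ))).coeff 0
      = if j = ⟨k - 1, by omega⟩ then c j else 0 := by
    have := j.isLt
    rw [coeff_C_mul_X_pow]
    simp only [Fin.ext_iff]
    split_ifs <;> first | rfl | omega
  simp [recurrenceCharPoly, hterm, coeff_X_pow, hk.ne]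

theorem aeval_recurrenceCharPoly {A : Type*} [CommRing A] [Algebra R A] (x : A) :
    aeval x (recurrenceCharPoly c) = x ^ k - ∑ j : Fin k, c j • x ^ (k - 1 - (j : ℕ)) := by
  simp [recurrenceCharPoly, Algebra.smul_def]

theorem root_recurrenceCharPoly_pow {n : ℕ} (hn : k ≤ n) :
    AdjoinRoot.root (recurrenceCharPoly c) ^ n
      = ∑ j : Fin k, c j • AdjoinRoot.root (recurrenceCharPoly c) ^ (n - 1 - (j : ℕ)) := by
  set x := AdjoinRoot.root (recurrenceCharPoly c)
  have hx : x ^ k = ∑ j : Fin k, c j • x ^ (k - 1 - (j : ℕ)) := by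
    have := aeval_recurrenceCharPoly c x
    rwa [AdjoinRoot.aeval_eq, AdjoinRoot.mk_self, eq_comm, sub_eq_zero] at this
  calc x ^ n = x ^ (n - k) * x ^ k := by rw [← pow_add]; congr 1; omega
    _ = ∑ j : Fin k, c j • x ^ (n - 1 - (j : ℕ)) := by
      rw [hx, Finset.mul_sum]
      refine Finset.sum_congr rfl fun j _ => ?_
      rw [mul_smul_comm, ← pow_add]
      congr 2
      omega

theorem exists_linearMap_eq_root_pow [Nontrivial R] (hk : 0 < k) {g : ℕ → R}
    (h0 : ∀ j < k - 1, g j = 0) (h1 : g (k - 1) = 1)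
    (hrec : ∀ n, k ≤ n → g n = ∑ j : Fin k, c j * g (n - 1 - (j : ℕ))) :
    ∃ L : AdjoinRoot (recurrenceCharPoly c) →ₗ[R] R,
      ∀ n, g n = L (AdjoinRoot.root (recurrenceCharPoly c) ^ n) := by
  set pb := AdjoinRoot.powerBasis' (recurrenceCharPoly_monic c)
  have hdim : pb.dim = k := by
    rw [AdjoinRoot.powerBasis'_dim, natDegree_recurrenceCharPoly]
  refine ⟨pb.basis.coord ⟨k - 1, by omega⟩, fun n => ?_⟩
  induction n using Nat.strong_induction_on with
  | _ n ih =>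
    rcases lt_or_ge n k with hn | hn
    · have hbasis : AdjoinRoot.root (recurrenceCharPoly c) ^ n = pb.basis ⟨n, by omega⟩ := by
        rw [pb.basis_eq_pow, AdjoinRoot.powerBasis'_gen]
      rw [hbasis, Module.Basis.coord_apply, Module.Basis.repr_self, Finsupp.single_apply]
      simp only [Fin.ext_iff]
      by_cases hn' : n = k - 1
      · simp [hn', h1]
      · simp [hn', h0 n (by omega)]
    · rw [hrec n hn, root_recurrenceCharPoly_pow c hn, map_sum]
      refine Finset.sum_congr rfl fun j _ => ?_
      rw [map_smul, smul_eq_mul, ih _ (by omega)]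

end RecurrenceCharPoly

namespace AdjoinRoot

variable {K : Type*} [Field K] {C : K[X]}

theorem isUnit_root (h : C.coeff 0 ≠ 0) : IsUnit (root C) := by
  have hcop : IsCoprime X C := irreducible_X.coprime_iff_not_dvd.mpr (mt X_dvd_iff.mp h)
  simpa [isCoprime_zero_right] using hcop.map (mk C)

theorem isReduced_of_squarefree (h : Squarefree C) : IsReduced (AdjoinRoot C) :=
  (Ideal.isRadical_iff_quotient_reduced _).mp (isRadical_iff_span_singleton.mp h.isRadical)

theorem isOfFinOrder_root [Finite K] (h : C.coeff 0 ≠ 0) : IsOfFinOrder (root C) := by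
  have hC : C ≠ 0 := fun hC => h (by rw [hC, coeff_zero])
  have := (powerBasis hC).finite
  have := Module.finite_of_finite K (M := AdjoinRoot C)
  exact (isUnit_root h).isOfFinOrder

theorem not_dvd_orderOf_root [Finite K] (p : ℕ) [Fact p.Prime] [CharP K p]
    (hdeg : C.degree ≠ 0) (h0 : C.coeff 0 ≠ 0) (hsqf : Squarefree C) :
    ¬ p ∣ orderOf (root C) := by
  have := AdjoinRoot.nontrivial C hdeg
  have := charP_of_injective_algebraMap' K (A := AdjoinRoot C) p
  have := isReduced_of_squarefree hsqf
  exact not_dvd_orderOf_of_isReduced p (isOfFinOrder_root h0)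

end AdjoinRoot

/-- if `p ∤ t_k` and the core polynomial is squarefree mod `p`, then
`p` does not divide the period `c_p` of the generalized Fibonacci sequence mod `p`. -/
theorem not_p_dvd_period_of_squarefree
    (k : ℕ) (hk : 1 ≤ k) (t : Fin k → ℤ) (f : ℕ → ℤ)
    (h0 : ∀ j, j < k - 1 → f j = 0) (h1 : f (k - 1) = 1)
    (hrec : ∀ n, k ≤ n → f n = ∑ j : Fin k, t j * f (n - 1 - (j : ℕ)))
    (p : ℕ) (hp : p.Prime) (hpt : ¬ (p : ℤ) ∣ t ⟨k - 1, by omega⟩)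
    (hsqf : Squarefree
      (Polynomial.map (Int.castRingHom (ZMod p))
        (Polynomial.X ^ k -
          ∑ j : Fin k, Polynomial.C (t j) * Polynomial.X ^ (k - 1 - (j : ℕ))))) :
    ¬ p ∣ sInf {c : ℕ | 0 < c ∧ ∀ n, ((f (n + c) : ZMod p) = (f n : ZMod p))} := by
  have : Fact p.Prime := ⟨hp⟩
  change Squarefree ((recurrenceCharPoly t).map _) at hsqf
  rw [recurrenceCharPoly_map] at hsqf
  set c : Fin k → ZMod p := Int.castRingHom (ZMod p) ∘ t
  have hcoeff : (recurrenceCharPoly c).coeff 0 ≠ 0 := by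
    rw [coeff_zero_recurrenceCharPoly c hk, neg_ne_zero]
    simpa [c, ZMod.intCast_zmod_eq_zero_iff_dvd] using hpt
  have hdeg : (recurrenceCharPoly c).degree ≠ 0 := by
    rw [degree_recurrenceCharPoly]; exact_mod_cast (by omega : k ≠ 0)
  obtain ⟨L, hL⟩ := exists_linearMap_eq_root_pow c hk (g := fun n => (f n : ZMod p))
    (fun j hj => by simp [h0 j hj]) (by simp [h1]) (fun n hn => by simp [hrec n hn, c])
  have hper : Function.Periodic (fun n => (f n : ZMod p))
      (orderOf (AdjoinRoot.root (recurrenceCharPoly c))) :=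
    fun n => by simp only [hL, pow_add, pow_orderOf_eq_one, mul_one]
  intro hdvd
  exact AdjoinRoot.not_dvd_orderOf_root p hdeg hcoeff hsqf
    (hdvd.trans (hper.sInf_dvd (AdjoinRoot.isOfFinOrder_root hcoeff).orderOf_pos))
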